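/- arXiv:1409.7781 — 7 statements merged into one kernel-verified Lean document; each statement's English description precedes it below -/
import Mathlib

section
/- Let H be a complex Hilbert space with dim H ≥ 2 and let T be a nonzero bounded linear operator on H. Then ε̂(T) = (‖T‖² − m(T)²)/(‖T‖² + m(T)²). -/
open scoped ComplexInnerProductSpace

noncomputable section

variable {H : Type*} [NormedAddCommGroup H] [InnerProductSpace ℂ H] [CompleteSpace H]

/-- `T` is `ε`-approximately orthogonality preserving: orthogonal vectors are mapped to
`ε`-orthogonal vectors. -/
def IsAOP (T : H →L[ℂ] H) (ε : ℝ) : Prop :=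
  ∀ x y : H, ⟪x, y⟫ = 0 → ‖⟪T x, T y⟫‖ ≤ ε * (‖T x‖ * ‖T y‖)

/-- `ε̂(T)`, the smallest `ε ∈ [0,1]` for which `T` is `ε`-AOP. -/
def epsHat (T : H →L[ℂ] H) : ℝ :=
  sInf {ε : ℝ | 0 ≤ ε ∧ ε ≤ 1 ∧ IsAOP T ε}

/-- The minimum modulus `m(T) = inf {‖T x‖ : ‖x‖ = 1}`. -/
def minMod (T : H →L[ℂ] H) : ℝ :=
  sInf {r : ℝ | ∃ x : H, ‖x‖ = 1 ∧ ‖T x‖ = r}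

/-- The set `ℂ𝒱` of scalar multiples of linear isometries of `H`. -/
def scalarIsoms (H : Type*) [NormedAddCommGroup H] [InnerProductSpace ℂ H] :
    Set (H →L[ℂ] H) :=
  {S | ∃ (c : ℂ) (V : H →L[ℂ] H), (∀ x : H, ‖V x‖ = ‖x‖) ∧ S = c • V}

/-- `dist(T, ℂ𝒱)`. -/
def distCV (T : H →L[ℂ] H) : ℝ := Metric.infDist T (scalarIsoms H)

/-- The set `𝒱` of linear isometries of `H`. -/
def isoms (H : Type*) [NormedAddCommGroup H] [InnerProductSpace ℂ H] :
    Set (H →L[ℂ] H) :=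
  {V | ∀ x : H, ‖V x‖ = ‖x‖}

/-- `dist(T, 𝒱)`. -/
def distV (T : H →L[ℂ] H) : ℝ := Metric.infDist T (isoms H)


section AuxLemmas


private lemma core_ineq (μ Λ a b A B d : ℝ) (hμ : 0 ≤ μ) (hμΛ : μ ≤ Λ)
    (ha : 0 ≤ a) (hb : 0 ≤ b)
    (hA1 : μ * a ≤ A) (hA2 : A ≤ Λ * a) (hB1 : μ * b ≤ B) (hB2 : B ≤ Λ * b)
    (hd1 : d ^ 2 ≤ (A - μ * a) * (B - μ * b))
    (hd2 : d ^ 2 ≤ (Λ * a - A) * (Λ * b - B)) :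
    (Λ + μ) ^ 2 * d ^ 2 ≤ (Λ - μ) ^ 2 * (A * B) := by
  have hΛ : 0 ≤ Λ := hμ.trans hμΛ
  rcases eq_or_lt_of_le ha with rfl | ha'
  · have hA0 : A = 0 := le_antisymm (by simpa using hA2) (by simpa using hA1)
    have hd0 : d ^ 2 = 0 := le_antisymm (by nlinarith [hd1]) (sq_nonneg d)
    simp [hA0, hd0]
  rcases eq_or_lt_of_le hb with rfl | hb'
  · have hB0 : B = 0 := le_antisymm (by simpa using hB2) (by simpa using hB1)
    have hd0 : d ^ 2 = 0 := le_antisymm (by nlinarith [hd1]) (sq_nonneg d)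
    simp [hB0, hd0]
  have hab : 0 < a * b := mul_pos ha' hb'
  rcases le_or_gt (A * b + a * B) ((Λ + μ) * (a * b)) with hcase | hcase
  · have hf2 : 0 ≤ Λ * (A * b + a * B) - μ * (Λ + μ) * (a * b) := by
      nlinarith [mul_nonneg (mul_nonneg hΛ hb) (sub_nonneg.2 hA1),
        mul_nonneg (mul_nonneg hΛ ha) (sub_nonneg.2 hB1),
        mul_nonneg (mul_nonneg hμ (sub_nonneg.2 hμΛ)) hab.le]
    have key : 0 ≤ (a * b) * ((Λ - μ) ^ 2 * (A * B) - (Λ + μ) ^ 2 * ((A - μ * a) * (B - μ * b))) := by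
      nlinarith [mul_nonneg (sub_nonneg.2 hcase) hf2,
        mul_nonneg (mul_nonneg hμ hΛ) (sq_nonneg (A * b - a * B)),
        mul_nonneg hμ (mul_nonneg (sub_nonneg.2 hcase) hf2)]
    have hE2 : 0 ≤ (Λ - μ) ^ 2 * (A * B) - (Λ + μ) ^ 2 * ((A - μ * a) * (B - μ * b)) :=
      nonneg_of_mul_nonneg_right key hab
    nlinarith [mul_le_mul_of_nonneg_left hd1 (sq_nonneg (Λ + μ))]
  · have hf2 : 0 ≤ Λ * (Λ + μ) * (a * b) - μ * (A * b + a * B) := by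
      nlinarith [mul_nonneg (mul_nonneg hμ hb) (sub_nonneg.2 hA2),
        mul_nonneg (mul_nonneg hμ ha) (sub_nonneg.2 hB2),
        mul_nonneg (mul_nonneg hΛ (sub_nonneg.2 hμΛ)) hab.le]
    have key : 0 ≤ (a * b) * ((Λ - μ) ^ 2 * (A * B) - (Λ + μ) ^ 2 * ((Λ * a - A) * (Λ * b - B))) := by
      nlinarith [mul_nonneg (sub_nonneg.2 hcase.le) hf2,
        mul_nonneg (mul_nonneg hμ hΛ) (sq_nonneg (A * b - a * B)),
        mul_nonneg hμ (mul_nonneg (sub_nonneg.2 hcase.le) hf2)]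
    have hE2 : 0 ≤ (Λ - μ) ^ 2 * (A * B) - (Λ + μ) ^ 2 * ((Λ * a - A) * (Λ * b - B)) :=
      nonneg_of_mul_nonneg_right key hab
    nlinarith [mul_le_mul_of_nonneg_left hd2 (sq_nonneg (Λ + μ))]


private lemma phase_scalar (z : ℂ) : ∃ c : ℂ, ‖c‖ = 1 ∧ c * z = (‖z‖ : ℂ) := by
  rcases eq_or_ne z 0 with rfl | hz
  · exact ⟨1, by simp, by simp⟩
  · have hz' : (‖z‖ : ℂ) ≠ 0 := by simpa using norm_ne_zero_iff.2 hz
    refine ⟨(starRingEnd ℂ) z / ‖z‖, ?_, ?_⟩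
    · rw [norm_div]; simp [hz]
    · rw [div_mul_eq_mul_div, mul_comm, Complex.mul_conj', sq, mul_div_assoc,
        div_self hz', mul_one]

private lemma opNorm_le_of_unit (T : H →L[ℂ] H) (c : ℝ) (hc : 0 ≤ c)
    (h : ∀ x : H, ‖x‖ = 1 → ‖T x‖ ≤ c) : ‖T‖ ≤ c := by
  apply T.opNorm_le_bound hc
  intro v
  rcases eq_or_ne v 0 with rfl | hv
  · simp
  · have hv' : (0:ℝ) < ‖v‖ := norm_pos_iff.2 hv
    have hu : ‖((‖v‖⁻¹ : ℝ) : ℂ) • v‖ = 1 := by rw [norm_smul]; simp [hv'.ne']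
    have h1 := h _ hu
    rw [map_smul, norm_smul] at h1
    simp only [Complex.norm_real, norm_inv, Real.norm_eq_abs, abs_of_pos hv'] at h1
    calc ‖T v‖ = ‖v‖⁻¹ * ‖T v‖ * ‖v‖ := by field_simp
      _ ≤ c * ‖v‖ := mul_le_mul_of_nonneg_right h1 hv'.le

private lemma minMod_mul_le (T : H →L[ℂ] H) (v : H) : minMod T * ‖v‖ ≤ ‖T v‖ := by
  rcases eq_or_ne v 0 with rfl | hv
  · simp
  · have hv' : (0:ℝ) < ‖v‖ := norm_pos_iff.2 hv
    have hu : ‖((‖v‖⁻¹ : ℝ) : ℂ) • v‖ = 1 := by rw [norm_smul]; simp [hv'.ne']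
    have h1 : minMod T ≤ ‖T (((‖v‖⁻¹ : ℝ) : ℂ) • v)‖ :=
      csInf_le ⟨0, fun r ⟨x, _, hr⟩ => hr ▸ norm_nonneg _⟩ ⟨_, hu, rfl⟩
    rw [map_smul, norm_smul] at h1
    simp only [Complex.norm_real, norm_inv, Real.norm_eq_abs, abs_of_pos hv'] at h1
    calc minMod T * ‖v‖ ≤ ‖v‖⁻¹ * ‖T v‖ * ‖v‖ := mul_le_mul_of_nonneg_right h1 hv'.le
      _ = ‖T v‖ := by field_simp

private lemma claimL (T : H →L[ℂ] H) (ε : ℝ) (hε : 0 ≤ ε)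
    (hA : ∀ x y : H, ⟪x, y⟫ = 0 → ‖⟪T x, T y⟫‖ ≤ ε * (‖T x‖ * ‖T y‖))
    (x y : H) (hx : ‖x‖ = 1) (hy : ‖y‖ = 1) :
    (1 - ε) * ‖T x‖ ^ 2 ≤ (1 + ε) * ‖T y‖ ^ 2 := by
  obtain ⟨c, hc, hcz⟩ := phase_scalar ⟪x, y⟫
  set y' := c • y with hy'def
  have hyn : ‖y'‖ = 1 := by rw [hy'def, norm_smul, hc, hy, one_mul]
  have hxy' : ⟪x, y'⟫ = (‖⟪x, y⟫‖ : ℂ) := by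
    rw [hy'def, inner_smul_right, hcz]
  have horth : ⟪x + y', x - y'⟫ = 0 := by
    rw [inner_sub_right, inner_add_left, inner_add_left]
    have h1 : ⟪x, x⟫ = ((‖x‖ : ℂ)) ^ 2 := inner_self_eq_norm_sq_to_K x
    have h2 : ⟪y', y'⟫ = ((‖y'‖ : ℂ)) ^ 2 := inner_self_eq_norm_sq_to_K y'
    have h3 : ⟪y', x⟫ = (starRingEnd ℂ) ⟪x, y'⟫ := (inner_conj_symm y' x).symm
    rw [h1, h2, h3, hxy', hx, hyn]
    simp [Complex.conj_ofReal]
    ring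
  have key := hA _ _ horth
  rw [map_add, map_sub] at key
  -- real part computation
  have hre : Complex.re ⟪T x + T y', T x - T y'⟫ = ‖T x‖ ^ 2 - ‖T y'‖ ^ 2 := by
    rw [inner_sub_right, inner_add_left, inner_add_left]
    have h1 : ⟪T x, T x⟫ = ((‖T x‖ : ℂ)) ^ 2 := inner_self_eq_norm_sq_to_K _
    have h2 : ⟪T y', T y'⟫ = ((‖T y'‖ : ℂ)) ^ 2 := inner_self_eq_norm_sq_to_K _
    have h3 : ⟪T y', T x⟫ = (starRingEnd ℂ) ⟪T x, T y'⟫ := (inner_conj_symm (T y') (T x)).symm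
    rw [h1, h2, h3]
    simp only [← Complex.ofReal_pow, Complex.add_re, Complex.sub_re, Complex.neg_re,
      Complex.conj_re, Complex.ofReal_re]
    ring
  have hre_le : ‖T x‖ ^ 2 - ‖T y'‖ ^ 2 ≤ ‖⟪T x + T y', T x - T y'⟫‖ := by
    rw [← hre]
    exact (le_abs_self _).trans (Complex.abs_re_le_norm _)
  have hpar : ‖T x + T y'‖ ^ 2 + ‖T x - T y'‖ ^ 2 = 2 * (‖T x‖ ^ 2 + ‖T y'‖ ^ 2) := by
    have := parallelogram_law_with_norm ℂ (T x) (T y')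
    linarith
  have hprod : ‖T x + T y'‖ * ‖T x - T y'‖ ≤ ‖T x‖ ^ 2 + ‖T y'‖ ^ 2 := by
    nlinarith [sq_nonneg (‖T x + T y'‖ - ‖T x - T y'‖), norm_nonneg (T x + T y'),
      norm_nonneg (T x - T y')]
  have hyT : ‖T y'‖ = ‖T y‖ := by rw [hy'def, map_smul, norm_smul, hc, one_mul]
  have : ‖T x‖ ^ 2 - ‖T y'‖ ^ 2 ≤ ε * (‖T x‖ ^ 2 + ‖T y'‖ ^ 2) := by
    calc ‖T x‖ ^ 2 - ‖T y'‖ ^ 2 ≤ ‖⟪T x + T y', T x - T y'⟫‖ := hre_le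
      _ ≤ ε * (‖T x + T y'‖ * ‖T x - T y'‖) := key
      _ ≤ ε * (‖T x‖ ^ 2 + ‖T y'‖ ^ 2) := mul_le_mul_of_nonneg_left hprod hε
  rw [hyT] at this
  linarith

private lemma claimU (T : H →L[ℂ] H) (hT : T ≠ 0) (m : ℝ) (hm0 : 0 ≤ m) (hmM : m ≤ ‖T‖)
    (hm : ∀ v : H, m * ‖v‖ ≤ ‖T v‖) (x y : H) (hxy : ⟪x, y⟫ = 0) :
    ‖⟪T x, T y⟫‖ ≤ (‖T‖ ^ 2 - m ^ 2) / (‖T‖ ^ 2 + m ^ 2) * (‖T x‖ * ‖T y‖) := by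
  set M := ‖T‖ with hM
  obtain ⟨c, hc, hcz⟩ := phase_scalar ⟪T x, T y⟫
  set d := ‖⟪T x, T y⟫‖ with hd
  set A := ‖T x‖ ^ 2 with hA
  set B := ‖T y‖ ^ 2 with hB
  set a := ‖x‖ ^ 2 with ha
  set b := ‖y‖ ^ 2 with hb
  clear_value M d A B a b
  have hwn : ∀ t : ℝ, ‖(t : ℂ) • x + c • y‖ ^ 2 = t ^ 2 * a + b := by
    intro t
    rw [norm_add_sq (𝕜 := ℂ), inner_smul_left, inner_smul_right, hxy]
    simp [norm_smul, hc, mul_pow, ha, hb]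
  have hTwn : ∀ t : ℝ, ‖T ((t : ℂ) • x + c • y)‖ ^ 2 = t ^ 2 * A + 2 * t * d + B := by
    intro t
    rw [map_add, map_smul, map_smul, norm_add_sq (𝕜 := ℂ), inner_smul_left,
      inner_smul_right, hcz, Complex.conj_ofReal, ← Complex.ofReal_mul]
    simp [norm_smul, hc, mul_pow, hA, hB]
    ring
  -- upper quadratic
  have q1 : ∀ t : ℝ, 0 ≤ (M ^ 2 * a - A) * (t * t) + -(2 * d) * t + (M ^ 2 * b - B) := by
    intro t
    have h1 : ‖T ((t : ℂ) • x + c • y)‖ ≤ M * ‖(t : ℂ) • x + c • y‖ := by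
      rw [hM]; exact T.le_opNorm _
    have h2 : ‖T ((t : ℂ) • x + c • y)‖ ^ 2 ≤ M ^ 2 * ‖(t : ℂ) • x + c • y‖ ^ 2 := by
      nlinarith [norm_nonneg (T ((t : ℂ) • x + c • y)), norm_nonneg ((t : ℂ) • x + c • y)]
    rw [hTwn t, hwn t] at h2
    nlinarith [h2]
  have q2 : ∀ t : ℝ, 0 ≤ (A - m ^ 2 * a) * (t * t) + (2 * d) * t + (B - m ^ 2 * b) := by
    intro t
    have h1 := hm ((t : ℂ) • x + c • y)
    have h2 : m ^ 2 * ‖(t : ℂ) • x + c • y‖ ^ 2 ≤ ‖T ((t : ℂ) • x + c • y)‖ ^ 2 := by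
      nlinarith [norm_nonneg ((t : ℂ) • x + c • y), mul_nonneg hm0 (norm_nonneg ((t : ℂ) • x + c • y))]
    rw [hTwn t, hwn t] at h2
    nlinarith [h2]
  have disc1 := discrim_le_zero q1
  have disc2 := discrim_le_zero q2
  rw [discrim] at disc1 disc2
  have hd2' : d ^ 2 ≤ (M ^ 2 * a - A) * (M ^ 2 * b - B) := by nlinarith [disc1]
  have hd1' : d ^ 2 ≤ (A - m ^ 2 * a) * (B - m ^ 2 * b) := by nlinarith [disc2]
  -- pointwise bounds
  have hMn : 0 ≤ M := hM ▸ norm_nonneg T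
  have hA2 : A ≤ M ^ 2 * a := by
    rw [hA, ha]
    have h := mul_self_le_mul_self (norm_nonneg (T x)) (hM ▸ T.le_opNorm x)
    calc ‖T x‖ ^ 2 = ‖T x‖ * ‖T x‖ := by ring
      _ ≤ M * ‖x‖ * (M * ‖x‖) := h
      _ = M ^ 2 * ‖x‖ ^ 2 := by ring
  have hB2 : B ≤ M ^ 2 * b := by
    rw [hB, hb]
    have h := mul_self_le_mul_self (norm_nonneg (T y)) (hM ▸ T.le_opNorm y)
    calc ‖T y‖ ^ 2 = ‖T y‖ * ‖T y‖ := by ring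
      _ ≤ M * ‖y‖ * (M * ‖y‖) := h
      _ = M ^ 2 * ‖y‖ ^ 2 := by ring
  have hA1 : m ^ 2 * a ≤ A := by
    rw [hA, ha]
    have h := mul_self_le_mul_self (mul_nonneg hm0 (norm_nonneg x)) (hm x)
    calc m ^ 2 * ‖x‖ ^ 2 = m * ‖x‖ * (m * ‖x‖) := by ring
      _ ≤ ‖T x‖ * ‖T x‖ := h
      _ = ‖T x‖ ^ 2 := by ring
  have hB1 : m ^ 2 * b ≤ B := by
    rw [hB, hb]
    have h := mul_self_le_mul_self (mul_nonneg hm0 (norm_nonneg y)) (hm y)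
    calc m ^ 2 * ‖y‖ ^ 2 = m * ‖y‖ * (m * ‖y‖) := by ring
      _ ≤ ‖T y‖ * ‖T y‖ := h
      _ = ‖T y‖ ^ 2 := by ring
  have key := core_ineq (m ^ 2) (M ^ 2) a b A B d (sq_nonneg m)
    (pow_le_pow_left₀ hm0 hmM 2) (by rw [ha]; positivity) (by rw [hb]; positivity)
    hA1 hA2 hB1 hB2 hd1' hd2'
  -- conclude
  have hMpos : 0 < M := by rw [hM]; exact norm_pos_iff.2 hT
  have hpos : 0 < M ^ 2 + m ^ 2 := by positivity
  have hdnn : (0:ℝ) ≤ d := by rw [hd]; positivity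
  have hMm : 0 ≤ M ^ 2 - m ^ 2 := sub_nonneg.2 (pow_le_pow_left₀ hm0 hmM 2)
  rw [div_mul_eq_mul_div, le_div_iff₀ hpos]
  have hu : 0 ≤ d * (M ^ 2 + m ^ 2) := mul_nonneg hdnn hpos.le
  have hv : 0 ≤ (M ^ 2 - m ^ 2) * (‖T x‖ * ‖T y‖) :=
    mul_nonneg hMm (mul_nonneg (norm_nonneg _) (norm_nonneg _))
  have hsq : (d * (M ^ 2 + m ^ 2)) ^ 2 ≤ ((M ^ 2 - m ^ 2) * (‖T x‖ * ‖T y‖)) ^ 2 := by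
    have e2 : ((M ^ 2 - m ^ 2) * (‖T x‖ * ‖T y‖)) ^ 2 = (M ^ 2 - m ^ 2) ^ 2 * (A * B) := by
      rw [hA, hB]; ring
    rw [e2]
    calc (d * (M ^ 2 + m ^ 2)) ^ 2 = (M ^ 2 + m ^ 2) ^ 2 * d ^ 2 := by ring
      _ ≤ (M ^ 2 - m ^ 2) ^ 2 * (A * B) := key
  calc d * (M ^ 2 + m ^ 2) = Real.sqrt ((d * (M ^ 2 + m ^ 2)) ^ 2) := (Real.sqrt_sq hu).symm
    _ ≤ Real.sqrt (((M ^ 2 - m ^ 2) * (‖T x‖ * ‖T y‖)) ^ 2) := Real.sqrt_le_sqrt hsq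
    _ = (M ^ 2 - m ^ 2) * (‖T x‖ * ‖T y‖) := Real.sqrt_sq hv

end AuxLemmas

/-- Theorem 2.3: `ε̂(T) = (‖T‖² − m(T)²)/(‖T‖² + m(T)²)` for nonzero `T`. -/
theorem epsHat_eq (hdim : 2 ≤ Module.rank ℂ H) (T : H →L[ℂ] H) (hT : T ≠ 0) :
    epsHat T = (‖T‖ ^ 2 - minMod T ^ 2) / (‖T‖ ^ 2 + minMod T ^ 2) := by
  -- unit vector
  have : Nontrivial H := by
    rw [← rank_pos_iff_nontrivial (R := ℂ)]
    exact lt_of_lt_of_le (by norm_num) hdim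
  obtain ⟨u0, hu0⟩ := exists_ne (0 : H)
  obtain ⟨u, hu⟩ : ∃ x : H, ‖x‖ = 1 :=
    ⟨‖u0‖⁻¹ • u0, by rw [norm_smul, norm_inv, norm_norm,
      inv_mul_cancel₀ (norm_ne_zero_iff.2 hu0)]⟩
  have hbdd : BddBelow {r : ℝ | ∃ x : H, ‖x‖ = 1 ∧ ‖T x‖ = r} :=
    ⟨0, fun r ⟨x, _, hr⟩ => hr ▸ norm_nonneg _⟩
  have hne : Set.Nonempty {r : ℝ | ∃ x : H, ‖x‖ = 1 ∧ ‖T x‖ = r} := ⟨‖T u‖, u, hu, rfl⟩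
  have hm0 : 0 ≤ minMod T := le_csInf hne (fun r ⟨x, _, hr⟩ => hr ▸ norm_nonneg _)
  have hmle : ∀ x : H, ‖x‖ = 1 → minMod T ≤ ‖T x‖ := fun x hx => csInf_le hbdd ⟨x, hx, rfl⟩
  have hmM : minMod T ≤ ‖T‖ := (hmle u hu).trans (by simpa [hu] using T.le_opNorm u)
  have hMpos : 0 < ‖T‖ := norm_pos_iff.2 hT
  have hpos : 0 < ‖T‖ ^ 2 + minMod T ^ 2 := by positivity
  have hε₀0 : 0 ≤ (‖T‖ ^ 2 - minMod T ^ 2) / (‖T‖ ^ 2 + minMod T ^ 2) :=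
    div_nonneg (sub_nonneg.2 (pow_le_pow_left₀ hm0 hmM 2)) hpos.le
  have hε₀1 : (‖T‖ ^ 2 - minMod T ^ 2) / (‖T‖ ^ 2 + minMod T ^ 2) ≤ 1 := by
    rw [div_le_one hpos]
    nlinarith [sq_nonneg (minMod T)]
  have hAOP : IsAOP T ((‖T‖ ^ 2 - minMod T ^ 2) / (‖T‖ ^ 2 + minMod T ^ 2)) :=
    fun x y hxy => claimU T hT (minMod T) hm0 hmM (minMod_mul_le T) x y hxy
  have hmem : (‖T‖ ^ 2 - minMod T ^ 2) / (‖T‖ ^ 2 + minMod T ^ 2) ∈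
      {ε : ℝ | 0 ≤ ε ∧ ε ≤ 1 ∧ IsAOP T ε} := ⟨hε₀0, hε₀1, hAOP⟩
  rw [epsHat]
  apply le_antisymm
  · exact csInf_le ⟨0, fun e he => he.1⟩ hmem
  · apply le_csInf ⟨_, hmem⟩
    rintro ε ⟨hεnn, hεle1, hA⟩
    rcases lt_or_ge ε 1 with hε1 | hε1
    · have h1e : (0:ℝ) < 1 - ε := by linarith
      have h1e' : (0:ℝ) < 1 + ε := by linarith
      -- step 1 : operator norm bound
      have h1 : ∀ y : H, ‖y‖ = 1 → (1 - ε) * ‖T‖ ^ 2 ≤ (1 + ε) * ‖T y‖ ^ 2 := by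
        intro y hy
        have hc₀nn : 0 ≤ (1 + ε) * ‖T y‖ ^ 2 / (1 - ε) :=
          div_nonneg (mul_nonneg h1e'.le (sq_nonneg _)) h1e.le
        have hc₀sq : Real.sqrt ((1 + ε) * ‖T y‖ ^ 2 / (1 - ε)) ^ 2
            = (1 + ε) * ‖T y‖ ^ 2 / (1 - ε) := Real.sq_sqrt hc₀nn
        have hub : ∀ x : H, ‖x‖ = 1 → ‖T x‖ ≤ Real.sqrt ((1 + ε) * ‖T y‖ ^ 2 / (1 - ε)) := by
          intro x hx
          have h2 := claimL T ε hεnn hA x y hx hy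
          have h3 : ‖T x‖ ^ 2 ≤ Real.sqrt ((1 + ε) * ‖T y‖ ^ 2 / (1 - ε)) ^ 2 := by
            rw [hc₀sq, le_div_iff₀ h1e]; linarith
          calc ‖T x‖ = Real.sqrt (‖T x‖ ^ 2) := (Real.sqrt_sq (norm_nonneg _)).symm
            _ ≤ Real.sqrt (Real.sqrt ((1 + ε) * ‖T y‖ ^ 2 / (1 - ε)) ^ 2) :=
                Real.sqrt_le_sqrt h3
            _ = Real.sqrt ((1 + ε) * ‖T y‖ ^ 2 / (1 - ε)) :=
                Real.sqrt_sq (Real.sqrt_nonneg _)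
        have hop : ‖T‖ ≤ Real.sqrt ((1 + ε) * ‖T y‖ ^ 2 / (1 - ε)) :=
          opNorm_le_of_unit T _ (Real.sqrt_nonneg _) hub
        have h4 : ‖T‖ ^ 2 ≤ (1 + ε) * ‖T y‖ ^ 2 / (1 - ε) := by
          rw [← hc₀sq]
          exact pow_le_pow_left₀ (norm_nonneg _) hop 2
        rw [le_div_iff₀ h1e] at h4
        linarith
      -- step 2 : lower bound on minMod
      have h3 : Real.sqrt ((1 - ε) * ‖T‖ ^ 2 / (1 + ε)) ≤ minMod T := by
        apply le_csInf hne
        rintro r ⟨y, hy, rfl⟩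
        have h1y := h1 y hy
        have h5 : (1 - ε) * ‖T‖ ^ 2 / (1 + ε) ≤ ‖T y‖ ^ 2 := by
          rw [div_le_iff₀ h1e']; linarith
        calc Real.sqrt ((1 - ε) * ‖T‖ ^ 2 / (1 + ε)) ≤ Real.sqrt (‖T y‖ ^ 2) :=
            Real.sqrt_le_sqrt h5
          _ = ‖T y‖ := Real.sqrt_sq (norm_nonneg _)
      have h4 : (1 - ε) * ‖T‖ ^ 2 / (1 + ε) ≤ minMod T ^ 2 := by
        have h6 := pow_le_pow_left₀ (Real.sqrt_nonneg _) h3 2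
        rwa [Real.sq_sqrt (div_nonneg (mul_nonneg h1e.le (sq_nonneg _)) h1e'.le)] at h6
      rw [div_le_iff₀ h1e'] at h4
      rw [div_le_iff₀ hpos]
      nlinarith [h4]
    · calc (‖T‖ ^ 2 - minMod T ^ 2) / (‖T‖ ^ 2 + minMod T ^ 2) ≤ 1 := hε₀1
        _ ≤ ε := hε1
end
end

section
/- Let H be a complex Hilbert space with dim H ≥ 2 and let T be a nonzero bounded linear operator on H with m(T) = 0 (i.e., T is not bounded from below). Then ε̂(T) = 1. -/
open scoped ComplexInnerProductSpace

noncomputable section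

variable {H : Type*} [NormedAddCommGroup H] [InnerProductSpace ℂ H] [CompleteSpace H]

/-!
Let `T` be `ε`-AOP with `ε < 1`. For orthogonal `x`, `y` of equal norm, `x + y` and `x - y` are
orthogonal as well, and `re ⟪T (x + y), T (x - y)⟫ = ‖T x‖² - ‖T y‖²`; hence
`(1 - ε) ‖T y‖ ≤ (1 + ε) ‖T x‖`. Splitting an arbitrary `v` along a unit vector `x` and its
orthogonal complement then gives `(1 - ε) ‖T v‖ ≤ 2 ‖v‖ ‖T x‖`, so
`(1 - ε) ‖T v‖ ≤ 2 ‖v‖ m(T)`. If `m(T) = 0` and `T ≠ 0`, this forces `ε ≥ 1`.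
-/

section InnerProductSpace

variable {𝕜 E : Type*} [RCLike 𝕜] [NormedAddCommGroup E] [InnerProductSpace 𝕜 E]

local notation "⟪" x ", " y "⟫" => inner 𝕜 x y

theorem re_inner_add_sub_eq_norm_sq_sub_norm_sq (u w : E) :
    RCLike.re ⟪u + w, u - w⟫ = ‖u‖ ^ 2 - ‖w‖ ^ 2 := by
  simp only [inner_add_left, inner_sub_right, map_add, map_sub, inner_re_symm (𝕜 := 𝕜) w u,
    inner_self_eq_norm_sq (𝕜 := 𝕜)]
  ring

theorem inner_add_sub_eq_zero_of_inner_eq_zero {x y : E} (hxy : ⟪x, y⟫ = 0) (hn : ‖x‖ = ‖y‖) :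
    ⟪x + y, x - y⟫ = 0 := by
  have hyx : ⟪y, x⟫ = 0 := inner_eq_zero_symm.1 hxy
  simp only [inner_add_left, inner_sub_right, hxy, hyx, inner_self_eq_norm_sq_to_K, hn]
  ring

end InnerProductSpace

section ComplexInnerProductSpace

variable {E : Type*} [NormedAddCommGroup E] [InnerProductSpace ℂ E]

theorem isAOP_one (T : E →L[ℂ] E) : IsAOP T 1 := fun x y _ => by
  rw [one_mul]
  exact norm_inner_le_norm _ _

namespace IsAOP

variable {T : E →L[ℂ] E} {ε : ℝ}

theorem norm_sub_norm_le (h : IsAOP T ε) (hε : 0 ≤ ε) {x y : E} (hxy : ⟪x, y⟫ = 0)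
    (hn : ‖x‖ = ‖y‖) : ‖T y‖ - ‖T x‖ ≤ ε * (‖T x‖ + ‖T y‖) := by
  set a := ‖T x‖
  set b := ‖T y‖
  have hsq : b ^ 2 - a ^ 2 ≤ ‖⟪T (x + y), T (x - y)⟫‖ := by
    have hre := re_inner_add_sub_eq_norm_sq_sub_norm_sq (𝕜 := ℂ) (T x) (T y)
    rw [← map_add, ← map_sub] at hre
    linarith [neg_le_abs (RCLike.re ⟪T (x + y), T (x - y)⟫), RCLike.abs_re_le_norm
      ⟪T (x + y), T (x - y)⟫]
  have hprod : (b - a) * (a + b) ≤ ε * (a + b) * (a + b) :=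
    calc (b - a) * (a + b) = b ^ 2 - a ^ 2 := by ring
      _ ≤ ‖⟪T (x + y), T (x - y)⟫‖ := hsq
      _ ≤ ε * (‖T (x + y)‖ * ‖T (x - y)‖) :=
        h _ _ (inner_add_sub_eq_zero_of_inner_eq_zero hxy hn)
      _ ≤ ε * ((a + b) * (a + b)) := by
        rw [map_add, map_sub]
        gcongr
        exacts [norm_add_le _ _, norm_sub_le _ _]
      _ = ε * (a + b) * (a + b) := by ring
  rcases (add_nonneg (norm_nonneg (T x)) (norm_nonneg (T y))).eq_or_lt with hab | hab
  · have ha : a = 0 := by linarith [norm_nonneg (T x), norm_nonneg (T y)]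
    have hb : b = 0 := by linarith [norm_nonneg (T x), norm_nonneg (T y)]
    simp [ha, hb]
  · linarith [le_of_mul_le_mul_right hprod hab]

theorem norm_apply_le (h : IsAOP T ε) (hε0 : 0 ≤ ε) (hε1 : ε ≤ 1) {x : E} (hx : ‖x‖ = 1)
    (v : E) : (1 - ε) * ‖T v‖ ≤ 2 * ‖v‖ * ‖T x‖ := by
  set z := v - ⟪x, v⟫ • x
  have hxz : ⟪x, z⟫ = 0 := by simp [z, inner_self_eq_norm_sq_to_K, hx]
  have hz : ‖z‖ ≤ ‖v‖ := by
    have hpyth := norm_add_sq_eq_norm_sq_add_norm_sq_of_inner_eq_zero (⟪x, v⟫ • x) z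
      (by rw [inner_smul_left, hxz, mul_zero])
    rw [show ⟪x, v⟫ • x + z = v by simp [z]] at hpyth
    nlinarith [norm_nonneg (⟪x, v⟫ • x), norm_nonneg z, norm_nonneg v]
  have hTz : (1 - ε) * ‖T z‖ ≤ (1 + ε) * (‖z‖ * ‖T x‖) := by
    have := h.norm_sub_norm_le hε0 (x := (‖z‖ : ℂ) • x) (y := z)
      (by rw [inner_smul_left, hxz, mul_zero]) (by simp [norm_smul, hx])
    simp only [map_smul, norm_smul, Complex.norm_real, norm_norm] at this
    linarith
  have hTv : ‖T v‖ ≤ ‖v‖ * ‖T x‖ + ‖T z‖ :=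
    calc ‖T v‖ = ‖⟪x, v⟫ • T x + T z‖ := by simp [z]
      _ ≤ ‖⟪x, v⟫‖ * ‖T x‖ + ‖T z‖ := by rw [← norm_smul]; exact norm_add_le _ _
      _ ≤ ‖v‖ * ‖T x‖ + ‖T z‖ := by
        gcongr
        simpa [hx] using norm_inner_le_norm (𝕜 := ℂ) x v
  have hzTx : ‖z‖ * ‖T x‖ ≤ ‖v‖ * ‖T x‖ := by gcongr
  nlinarith [norm_nonneg (T x), norm_nonneg v]

theorem mul_norm_apply_le_minMod [Nontrivial E] (h : IsAOP T ε) (hε0 : 0 ≤ ε) (hε1 : ε ≤ 1)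
    (v : E) : (1 - ε) * ‖T v‖ ≤ 2 * ‖v‖ * minMod T := by
  rcases eq_or_ne v 0 with rfl | hv
  · simp
  have hv2 : 0 < 2 * ‖v‖ := by positivity
  rw [← div_le_iff₀' hv2]
  obtain ⟨x₀, hx₀⟩ := exists_norm_eq E zero_le_one
  refine le_csInf ⟨_, x₀, hx₀, rfl⟩ ?_
  rintro _ ⟨x, hx, rfl⟩
  rw [div_le_iff₀' hv2]
  exact h.norm_apply_le hε0 hε1 hx v

end IsAOP

end ComplexInnerProductSpace

theorem epsHat_eq_one_general (T : H →L[ℂ] H) (hT : T ≠ 0)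
    (hm : minMod T = 0) : epsHat T = 1 := by
  have hone : (1 : ℝ) ∈ {ε : ℝ | 0 ≤ ε ∧ ε ≤ 1 ∧ IsAOP T ε} := ⟨zero_le_one, le_rfl, isAOP_one T⟩
  refine le_antisymm (csInf_le ⟨0, fun _ hε => hε.1⟩ hone) (le_csInf ⟨1, hone⟩ ?_)
  rintro ε ⟨hε0, hε1, hε⟩
  obtain ⟨v, hv⟩ : ∃ v, T v ≠ 0 := by
    by_contra! h
    exact hT (ContinuousLinearMap.ext h)
  have : Nontrivial H := nontrivial_of_ne v 0 (by rintro rfl; simp at hv)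
  have hbound := hε.mul_norm_apply_le_minMod hε0 hε1 v
  rw [hm, mul_zero] at hbound
  by_contra! hlt
  exact hbound.not_gt (mul_pos (sub_pos.2 hlt) (norm_pos_iff.2 hv))

/-- If `T ≠ 0` is not bounded from below, then `ε̂(T) = 1`. -/
theorem epsHat_eq_one (hdim : 2 ≤ Module.rank ℂ H) (T : H →L[ℂ] H) (hT : T ≠ 0)
    (hm : minMod T = 0) : epsHat T = 1 :=
  epsHat_eq_one_general T hT hm
end
end

section
/- Let H be a complex Hilbert space with dim H ≥ 2 and let T be a bounded linear operator on H. Then T is orthogonality-preserving (for all x, y ∈ H, ⟨x,y⟩ = 0 implies ⟨Tx,Ty⟩ = 0) if and only if T is a scalar multiple of a linear isometry, i.e., T = λV for some λ ∈ ℂ and some bounded linear operator V on H satisfying ‖Vx‖ = ‖x‖ for all x ∈ H. -/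
open scoped ComplexInnerProductSpace

noncomputable section

variable {H : Type*} [NormedAddCommGroup H] [InnerProductSpace ℂ H] [CompleteSpace H]

omit [CompleteSpace H] in
lemma my_norm_map_eq (T : H →L[ℂ] H)
    (hT : ∀ x y : H, ⟪x, y⟫ = 0 → ⟪T x, T y⟫ = 0)
    {x y : H} (hn : ‖x‖ = ‖y‖) (hxy : ⟪x, y⟫ = 0) : ‖T x‖ = ‖T y‖ := by
  have hyx : ⟪y, x⟫ = 0 := inner_eq_zero_symm.mp hxy
  have h1 : ⟪x + y, x - y⟫ = 0 := by
    simp [inner_add_left, inner_sub_right, hxy, hyx,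
      inner_self_eq_norm_sq_to_K, hn]
  have h2 := hT _ _ h1
  have hT2 : ⟪T y, T x⟫ = 0 := hT y x hyx
  have hT1 : ⟪T x, T y⟫ = 0 := hT x y hxy
  rw [map_add, map_sub] at h2
  simp [inner_add_left, inner_sub_right, hT1, hT2,
    inner_self_eq_norm_sq_to_K, sub_eq_zero] at h2
  have h3 : (‖T x‖ : ℝ) ^ 2 = ‖T y‖ ^ 2 := by exact_mod_cast h2
  nlinarith [norm_nonneg (T x), norm_nonneg (T y)]

/-- `T` is orthogonality preserving iff `T` is a scalar multiple of a linear isometry. -/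
theorem op_iff_scalar_isometry (hdim : 2 ≤ Module.rank ℂ H) (T : H →L[ℂ] H) :
    (∀ x y : H, ⟪x, y⟫ = 0 → ⟪T x, T y⟫ = 0) ↔
      ∃ (c : ℂ) (V : H →L[ℂ] H), (∀ x : H, ‖V x‖ = ‖x‖) ∧ T = c • V := by
  constructor
  · intro hT
    have hnt : Nontrivial H := by
      rw [← rank_pos_iff_nontrivial (R := ℂ)]
      exact lt_of_lt_of_le (by norm_num) hdim
    obtain ⟨x, hx⟩ := exists_ne (0 : H)
    set x₀ : H := ‖x‖⁻¹ • x with hx₀def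
    have hx₀ : ‖x₀‖ = 1 := norm_smul_inv_norm hx
    -- every unit vector has the same image norm
    have key : ∀ u : H, ‖u‖ = 1 → ‖T u‖ = ‖T x₀‖ := by
      intro u hu
      set α : ℂ := ⟪x₀, u⟫ with hα
      set q : H := u - α • x₀ with hqdef
      have hq : ⟪x₀, q⟫ = 0 := by
        simp [hqdef, inner_sub_right, inner_smul_right,
          inner_self_eq_norm_sq_to_K, hx₀, hα]
      have hu' : u = α • x₀ + q := by simp [hqdef]
      by_cases hq0 : q = 0
      · have huα : u = α • x₀ := by simpa [hq0] using hu'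
        have hαn : ‖α‖ = 1 := by
          have := hu
          rw [huα, norm_smul, hx₀, mul_one] at this
          exact this
        rw [huα, map_smul, norm_smul, hαn, one_mul]
      · -- q ≠ 0
        have hqx : ⟪(‖q‖ : ℂ) • x₀, q⟫ = 0 := by
          rw [inner_smul_left, hq, mul_zero]
        have hnorm : ‖(‖q‖ : ℂ) • x₀‖ = ‖q‖ := by
          simp [norm_smul, hx₀]
        have hTq : ‖T ((‖q‖ : ℂ) • x₀)‖ = ‖T q‖ :=
          my_norm_map_eq T hT hnorm hqx
        have hTq' : ‖T q‖ = ‖q‖ * ‖T x₀‖ := by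
          rw [← hTq, map_smul, norm_smul]
          simp
        -- orthogonal decompositions
        have horth : ⟪α • x₀, q⟫ = 0 := by simp [inner_smul_left, hq]
        have hTorth : ⟪T (α • x₀), T q⟫ = 0 := hT _ _ horth
        have h1 : ‖u‖ * ‖u‖ = ‖α • x₀‖ * ‖α • x₀‖ + ‖q‖ * ‖q‖ := by
          conv_lhs => rw [hu']
          exact norm_add_sq_eq_norm_sq_add_norm_sq_of_inner_eq_zero _ _ horth
        have h2 : ‖T u‖ * ‖T u‖ = ‖T (α • x₀)‖ * ‖T (α • x₀)‖ + ‖T q‖ * ‖T q‖ := by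
          conv_lhs => rw [hu', map_add]
          exact norm_add_sq_eq_norm_sq_add_norm_sq_of_inner_eq_zero _ _ hTorth
        have hαx : ‖α • x₀‖ = ‖α‖ := by simp [norm_smul, hx₀]
        have hTαx : ‖T (α • x₀)‖ = ‖α‖ * ‖T x₀‖ := by
          rw [map_smul, norm_smul]
        rw [hu] at h1
        rw [hαx] at h1
        rw [hTαx, hTq'] at h2
        have hsum : ‖α‖ * ‖α‖ + ‖q‖ * ‖q‖ = 1 := by linarith
        have hsq : ‖T u‖ * ‖T u‖ = ‖T x₀‖ * ‖T x₀‖ := by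
          rw [h2]; linear_combination (‖T x₀‖ * ‖T x₀‖) * hsum
        nlinarith [hsq, norm_nonneg (T u), norm_nonneg (T x₀)]
    -- now ∀ v, ‖T v‖ = ‖T x₀‖ * ‖v‖
    have hall : ∀ v : H, ‖T v‖ = ‖T x₀‖ * ‖v‖ := by
      intro v
      by_cases hv : v = 0
      · simp [hv]
      · have hunit : ‖(‖v‖⁻¹ : ℂ) • v‖ = 1 := by
          simp [norm_smul, norm_inv, inv_mul_cancel₀ (norm_ne_zero_iff.mpr hv)]
        have := key _ hunit
        rw [map_smul, norm_smul] at this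
        simp only [norm_inv, Complex.norm_real, Real.norm_eq_abs,
          abs_norm] at this
        have hv' : ‖v‖ ≠ 0 := norm_ne_zero_iff.mpr hv
        field_simp at this
        linarith [this]
    set k : ℝ := ‖T x₀‖ with hk
    by_cases hk0 : k = 0
    · refine ⟨0, ContinuousLinearMap.id ℂ H, fun x => rfl, ?_⟩
      ext v
      have := hall v
      rw [hk0, zero_mul] at this
      simp [norm_eq_zero.mp this]
    · refine ⟨(k : ℂ), (k : ℂ)⁻¹ • T, ?_, ?_⟩
      · intro v
        rw [ContinuousLinearMap.smul_apply, norm_smul, hall v]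
        have hkpos : (0:ℝ) ≤ k := norm_nonneg _
        simp only [norm_inv, Complex.norm_real, Real.norm_eq_abs,
          abs_of_nonneg hkpos]
        field_simp
      · rw [smul_smul, mul_inv_cancel₀ (by exact_mod_cast hk0), one_smul]
  · rintro ⟨c, V, hV, rfl⟩
    intro x y hxy
    let li : H →ₗᵢ[ℂ] H := ⟨(V : H →ₗ[ℂ] H), hV⟩
    have : ⟪V x, V y⟫ = (0 : ℂ) := by
      have := li.inner_map_map x y
      simpa [li] using this.trans hxy
    simp [inner_smul_left, inner_smul_right, this]
end
end

section
/- Let H be a complex Hilbert space with dim H ≥ 2 and let T be a nonzero bounded linear operator on H. Then there exists ε ∈ [0,1) such that T is ε-orthogonality-preserving if and only if T is bounded from below, i.e., m(T) > 0. -/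
/-!
If `m = m(T) > 0`, then `m ‖z‖ ≤ ‖T z‖ ≤ ‖T‖ ‖z‖`, so `⟪T x, T y⟫ - m² ⟪x, y⟫` and
`‖T‖² ⟪x, y⟫ - ⟪T x, T y⟫` are positive semidefinite Hermitian forms. For orthogonal unit vectors
`x, y`, Cauchy–Schwarz for both forms bounds `‖⟪T x, T y⟫‖²`, and the two bounds combine into
Wielandt's inequality `‖⟪T x, T y⟫‖ ≤ (‖T‖² - m²) / (‖T‖² + m²) ‖T x‖ ‖T y‖`.

Conversely, if `x ⊥ y` and `‖x‖ = ‖y‖`, then `y + x ⊥ y - x` and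
`Re ⟪T (y + x), T (y - x)⟫ = ‖T y‖² - ‖T x‖²`, so an `ε`-AOP operator satisfies
`‖T y‖² - ‖T x‖² ≤ ε (‖T x‖ + ‖T y‖)²`. Were `‖T x‖` arbitrarily small on unit vectors `x`, the
component orthogonal to `x` of a fixed unit `y` with `T y ≠ 0` would violate this when `ε < 1`.
-/

open scoped ComplexInnerProductSpace

noncomputable section

variable {H : Type*} [NormedAddCommGroup H] [InnerProductSpace ℂ H] [CompleteSpace H]

open scoped InnerProductSpace
open RCLike

section CauchySchwarz

variable {𝕜 E F G : Type*} [RCLike 𝕜] [AddCommGroup E] [Module 𝕜 E]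
  [SeminormedAddCommGroup F] [InnerProductSpace 𝕜 F]
  [SeminormedAddCommGroup G] [InnerProductSpace 𝕜 G]

theorem norm_inner_sub_inner_sq_le (S : E →ₗ[𝕜] F) (T : E →ₗ[𝕜] G)
    (h : ∀ z, ‖S z‖ ≤ ‖T z‖) (x y : E) :
    ‖⟪T x, T y⟫_𝕜 - ⟪S x, S y⟫_𝕜‖ ^ 2 ≤ (‖T x‖ ^ 2 - ‖S x‖ ^ 2) * (‖T y‖ ^ 2 - ‖S y‖ ^ 2) := by
  have re_form (z : E) : re (⟪T z, T z⟫_𝕜 - ⟪S z, S z⟫_𝕜) = ‖T z‖ ^ 2 - ‖S z‖ ^ 2 := by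
    simp only [map_sub, inner_self_eq_norm_sq]
  let form : PreInnerProductSpace.Core 𝕜 E :=
    { inner x y := ⟪T x, T y⟫_𝕜 - ⟪S x, S y⟫_𝕜
      conj_inner_symm x y := by simp only [map_sub, inner_conj_symm]
      re_inner_nonneg z := by
        rw [re_form]; exact sub_nonneg.2 (pow_le_pow_left₀ (norm_nonneg _) (h z) 2)
      add_left x y z := by simp only [map_add, inner_add_left]; ring
      smul_left x y r := by simp only [map_smul, inner_smul_left]; ring }
  have := InnerProductSpace.Core.inner_mul_inner_self_le (c := form) x y
  rw [InnerProductSpace.Core.norm_inner_symm (c := form) y x, ← sq] at this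
  have cs : ‖⟪T x, T y⟫_𝕜 - ⟪S x, S y⟫_𝕜‖ ^ 2 ≤
      re (⟪T x, T x⟫_𝕜 - ⟪S x, S x⟫_𝕜) * re (⟪T y, T y⟫_𝕜 - ⟪S y, S y⟫_𝕜) := this
  rwa [re_form, re_form] at cs

theorem re_inner_add_sub (x y : F) : re ⟪x + y, x - y⟫_𝕜 = ‖x‖ ^ 2 - ‖y‖ ^ 2 := by
  simp only [inner_add_left, inner_sub_right, map_add, map_sub, inner_self_eq_norm_sq,
    inner_re_symm x y]
  ring

theorem inner_add_sub_eq_zero {x y : F} (hxy : ⟪x, y⟫_𝕜 = 0) (h : ‖x‖ = ‖y‖) :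
    ⟪x + y, x - y⟫_𝕜 = 0 := by
  rw [inner_add_left, inner_sub_right, inner_sub_right, hxy, inner_eq_zero_symm.1 hxy,
    inner_self_eq_norm_sq_to_K, inner_self_eq_norm_sq_to_K, h]
  ring

end CauchySchwarz

-- The scalar core of Wielandt's inequality: `u ≤ A, B ≤ v` bound `‖T ·‖²` on unit vectors, and
-- `R = ‖⟪Tx, Ty⟫‖²` for orthogonal unit `x, y`, with the two Cauchy–Schwarz bounds on `R`.
theorem add_sq_mul_le_sub_sq_mul_mul {u v A B R : ℝ} (hu : 0 ≤ u) (hA : u ≤ A) (hA' : A ≤ v)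
    (hB : u ≤ B) (hB' : B ≤ v) (hlow : R ≤ (A - u) * (B - u)) (hup : R ≤ (v - A) * (v - B)) :
    (u + v) ^ 2 * R ≤ (v - u) ^ 2 * (A * B) := by
  have hv : 0 ≤ v := hu.trans (hA.trans hA')
  rcases le_total (A + B) (u + v) with hs | hs
  · have h₁ : 0 ≤ v * (A + B) - (u + v) * u := by nlinarith
    linear_combination (u + v) ^ 2 * hlow + u * v * sq_nonneg (A - B)
      + u * mul_nonneg (sub_nonneg.2 hs) h₁
  · have h₁ : 0 ≤ (u + v) * v - u * (A + B) := by nlinarith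
    linear_combination (u + v) ^ 2 * hup + u * v * sq_nonneg (A - B)
      + v * mul_nonneg (sub_nonneg.2 hs) h₁

theorem ContinuousLinearMap.exists_norm_eq_one_apply_ne_zero {𝕜 E F : Type*} [RCLike 𝕜]
    [NormedAddCommGroup E] [NormedSpace 𝕜 E] [NormedAddCommGroup F] [NormedSpace 𝕜 F]
    {T : E →L[𝕜] F} (hT : T ≠ 0) : ∃ y, ‖y‖ = 1 ∧ T y ≠ 0 := by
  obtain ⟨x, hx⟩ := DFunLike.ne_iff.1 hT
  have hx0 : x ≠ 0 := by rintro rfl; simp at hx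
  refine ⟨(‖x‖⁻¹ : 𝕜) • x, norm_smul_inv_norm hx0, ?_⟩
  simpa [map_smul, hx0] using hx

theorem ContinuousLinearMap.exists_inner_eq_zero_norm_le_two {𝕜 E F : Type*} [RCLike 𝕜]
    [NormedAddCommGroup E] [InnerProductSpace 𝕜 E] [NormedAddCommGroup F] [NormedSpace 𝕜 F]
    (T : E →L[𝕜] F) {x y : E} (hx : ‖x‖ = 1) (hy : ‖y‖ = 1) :
    ∃ v, ⟪x, v⟫_𝕜 = 0 ∧ ‖v‖ ≤ 2 ∧ ‖T y‖ - ‖T x‖ ≤ ‖T v‖ := by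
  have hxy : ‖⟪x, y⟫_𝕜‖ ≤ 1 := by simpa [hx, hy] using norm_inner_le_norm (𝕜 := 𝕜) x y
  refine ⟨y - ⟪x, y⟫_𝕜 • x, ?_, ?_, ?_⟩
  · simp [inner_sub_right, inner_smul_right, inner_self_eq_norm_sq_to_K, hx]
  · calc ‖y - ⟪x, y⟫_𝕜 • x‖ ≤ ‖y‖ + ‖⟪x, y⟫_𝕜 • x‖ := norm_sub_le _ _
      _ ≤ 2 := by rw [norm_smul, hx, hy]; linarith
  · have : ‖⟪x, y⟫_𝕜 • T x‖ ≤ ‖T x‖ := by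
      rw [norm_smul]; exact mul_le_of_le_one_left (norm_nonneg _) hxy
    calc ‖T y‖ - ‖T x‖ ≤ ‖T y‖ - ‖⟪x, y⟫_𝕜 • T x‖ := by linarith
      _ ≤ ‖T (y - ⟪x, y⟫_𝕜 • x)‖ := by rw [map_sub, map_smul]; exact norm_sub_norm_le _ _

section MinimumModulus

variable {E : Type*} [NormedAddCommGroup E] [InnerProductSpace ℂ E]

theorem minMod_le (T : E →L[ℂ] E) {x : E} (hx : ‖x‖ = 1) : minMod T ≤ ‖T x‖ :=
  csInf_le ⟨0, by rintro r ⟨z, -, rfl⟩; positivity⟩ ⟨x, hx, rfl⟩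

theorem le_minMod [Nontrivial E] {T : E →L[ℂ] E} {δ : ℝ} (h : ∀ x : E, ‖x‖ = 1 → δ ≤ ‖T x‖) :
    δ ≤ minMod T := by
  obtain ⟨x, hx⟩ := exists_norm_eq E zero_le_one
  exact le_csInf ⟨_, x, hx, rfl⟩ (by rintro r ⟨z, hz, rfl⟩; exact h z hz)

theorem minMod_mul_norm_le (T : E →L[ℂ] E) (z : E) : minMod T * ‖z‖ ≤ ‖T z‖ := by
  rcases eq_or_ne z 0 with rfl | hz
  · simp
  have := minMod_le T (norm_smul_inv_norm (𝕜 := ℂ) hz)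
  rw [map_smul, norm_smul, norm_inv, RCLike.norm_ofReal, abs_norm, inv_mul_eq_div,
    le_div_iff₀ (norm_pos_iff.2 hz)] at this
  exact this

theorem minMod_le_opNorm (T : E →L[ℂ] E) : minMod T ≤ ‖T‖ := by
  rcases subsingleton_or_nontrivial E with hH | hH
  · have : {r : ℝ | ∃ x : E, ‖x‖ = 1 ∧ ‖T x‖ = r} = ∅ := by
      ext r; simp [Subsingleton.elim _ (0 : E)]
    rw [minMod, this, Real.sInf_empty]; positivity
  · obtain ⟨x, hx⟩ := exists_norm_eq E zero_le_one
    simpa [hx] using (minMod_le T hx).trans (T.le_opNorm x)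

end MinimumModulus

section ApproximateOrthogonality

variable {E : Type*} [NormedAddCommGroup E] [InnerProductSpace ℂ E] {T : E →L[ℂ] E} {ε : ℝ}

theorem IsAOP.of_norm_eq_one
    (h : ∀ x y : E, ‖x‖ = 1 → ‖y‖ = 1 → ⟪x, y⟫ = 0 → ‖⟪T x, T y⟫‖ ≤ ε * (‖T x‖ * ‖T y‖)) :
    IsAOP T ε := by
  intro x y hxy
  rcases eq_or_ne x 0 with rfl | hx
  · simp
  rcases eq_or_ne y 0 with rfl | hy
  · simp
  have key := h _ _ (norm_smul_inv_norm (𝕜 := ℂ) hx) (norm_smul_inv_norm (𝕜 := ℂ) hy)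
    (by rw [inner_smul_left, inner_smul_right, hxy, mul_zero, mul_zero])
  simp only [map_smul, inner_smul_left, inner_smul_right, norm_mul, norm_smul, RCLike.norm_conj,
    norm_inv, RCLike.norm_ofReal, abs_norm] at key
  have hscaled : (‖x‖⁻¹ * ‖y‖⁻¹) * ‖⟪T x, T y⟫‖ ≤ (‖x‖⁻¹ * ‖y‖⁻¹) * (ε * (‖T x‖ * ‖T y‖)) := by
    linarith
  exact le_of_mul_le_mul_left hscaled (by positivity)

theorem isAOP_of_minMod_pos (hm : 0 < minMod T) :
    IsAOP T ((‖T‖ ^ 2 - minMod T ^ 2) / (‖T‖ ^ 2 + minMod T ^ 2)) := by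
  set m := minMod T
  set M := ‖T‖
  have hmM : m ≤ M := minMod_le_opNorm T
  have hden : 0 < M ^ 2 + m ^ 2 := by positivity
  refine .of_norm_eq_one fun x y hx hy hxy => ?_
  have hlow (z : E) : ‖((m : ℂ) • LinearMap.id : E →ₗ[ℂ] E) z‖ ≤ ‖T z‖ := by
    simpa [norm_smul, abs_of_pos hm] using minMod_mul_norm_le T z
  have hup (z : E) : ‖T z‖ ≤ ‖((M : ℂ) • LinearMap.id : E →ₗ[ℂ] E) z‖ := by
    simpa [norm_smul, M] using T.le_opNorm z
  have cs_low := norm_inner_sub_inner_sq_le _ T.toLinearMap hlow x y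
  have cs_up := norm_inner_sub_inner_sq_le T.toLinearMap _ hup x y
  simp only [LinearMap.smul_apply, LinearMap.id_apply, ContinuousLinearMap.coe_coe,
    inner_smul_left, inner_smul_right, hxy, mul_zero, sub_zero, zero_sub, norm_neg, norm_smul,
    Complex.norm_real, Real.norm_eq_abs, abs_of_pos hm, hx, hy,
    mul_one, sq_abs] at cs_low cs_up
  have hTx : ‖T x‖ ≤ M := by simpa [hx] using T.le_opNorm x
  have hTy : ‖T y‖ ≤ M := by simpa [hy] using T.le_opNorm y
  have hsq := add_sq_mul_le_sub_sq_mul_mul (sq_nonneg m)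
    (pow_le_pow_left₀ hm.le (minMod_le T hx) 2) (pow_le_pow_left₀ (norm_nonneg _) hTx 2)
    (pow_le_pow_left₀ hm.le (minMod_le T hy) 2) (pow_le_pow_left₀ (norm_nonneg _) hTy 2)
    cs_low cs_up
  rw [div_mul_eq_mul_div, le_div_iff₀ hden]
  refine (pow_le_pow_iff_left₀ (by positivity) ?_ two_ne_zero).1 (by linarith)
  exact mul_nonneg (by nlinarith) (by positivity)

theorem IsAOP.sub_sq_le (hA : IsAOP T ε) (hε : 0 ≤ ε) {x y : E} (hxy : ⟪x, y⟫ = 0)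
    (hn : ‖x‖ = ‖y‖) : ‖T y‖ ^ 2 - ‖T x‖ ^ 2 ≤ ε * (‖T x‖ + ‖T y‖) ^ 2 := by
  calc ‖T y‖ ^ 2 - ‖T x‖ ^ 2 = RCLike.re ⟪T (y + x), T (y - x)⟫ := by
        rw [map_add, map_sub, re_inner_add_sub]
    _ ≤ ‖⟪T (y + x), T (y - x)⟫‖ := RCLike.re_le_norm _
    _ ≤ ε * (‖T (y + x)‖ * ‖T (y - x)‖) :=
        hA _ _ (inner_add_sub_eq_zero (inner_eq_zero_symm.1 hxy) hn.symm)
    _ ≤ ε * (‖T x‖ + ‖T y‖) ^ 2 := by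
        rw [map_add, map_sub, sq, add_comm (T y)]
        refine mul_le_mul_of_nonneg_left (mul_le_mul (norm_add_le _ _)
          ((norm_sub_le _ _).trans_eq (add_comm _ _)) (norm_nonneg _) (by positivity)) hε

-- If `‖T x‖ < ‖T y‖ / 2`, then `‖T v‖ ≥ ‖T y‖ / 2`, and `sub_sq_le` for the pair `‖v‖ • x ⊥ v`
-- bounds `(1 - ε) ‖T v‖²` by `12 ‖T‖ ‖T x‖`.
theorem IsAOP.one_sub_mul_sq_norm_apply_le (hA : IsAOP T ε) (hε₀ : 0 ≤ ε) (hε₁ : ε < 1)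
    {x y : E} (hx : ‖x‖ = 1) (hy : ‖y‖ = 1) : (1 - ε) * ‖T y‖ ^ 2 ≤ 48 * ‖T‖ * ‖T x‖ := by
  obtain ⟨v, hxv, hv, hTv⟩ := T.exists_inner_eq_zero_norm_le_two hx hy
  have key := hA.sub_sq_le hε₀ (x := (‖v‖ : ℂ) • x) (y := v)
    (by rw [inner_smul_left, hxv, mul_zero]) (by simp [norm_smul, hx])
  simp only [map_smul, norm_smul, Complex.norm_real, norm_norm] at key
  set c := ‖T y‖
  set N := ‖T‖
  set t := ‖T x‖
  set a := ‖v‖ * t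
  set β := ‖T v‖
  have hcN : c ≤ N := by simpa [hy] using T.le_opNorm y
  have hβN : β ≤ 2 * N := (T.le_opNorm v).trans (by nlinarith [norm_nonneg T])
  have hc₀ : 0 ≤ c := norm_nonneg _
  have ht₀ : 0 ≤ t := norm_nonneg _
  rcases le_or_gt (c / 2) t with ht | ht
  · nlinarith
  have ha : a ≤ 2 * t := mul_le_mul_of_nonneg_right hv ht₀
  have hβ : c / 2 ≤ β := by linarith
  have ha₀ : 0 ≤ a := by positivity
  have hβ₀ : 0 ≤ β := norm_nonneg _
  have h1 : (1 - ε) * β ^ 2 ≤ 2 * a * (a + β) := by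
    nlinarith [mul_nonneg (sub_nonneg.2 hε₁.le) (mul_nonneg ha₀ (add_nonneg ha₀ hβ₀))]
  have h2 : 2 * a * (a + β) ≤ 12 * N * t := by
    nlinarith [mul_le_mul ha (by linarith : a + β ≤ 3 * N) (by positivity) (by positivity)]
  nlinarith [mul_le_mul_of_nonneg_left (pow_le_pow_left₀ (by positivity) hβ 2)
    (sub_nonneg.2 hε₁.le)]

theorem IsAOP.minMod_pos (hA : IsAOP T ε) (hε₀ : 0 ≤ ε) (hε₁ : ε < 1) (hT : T ≠ 0) :
    0 < minMod T := by
  obtain ⟨y, hy, hTy⟩ := T.exists_norm_eq_one_apply_ne_zero hT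
  have : Nontrivial E := nontrivial_of_ne y 0 (by rintro rfl; simp at hy)
  have hN : 0 < ‖T‖ := norm_pos_iff.2 hT
  have hδ : 0 < (1 - ε) * ‖T y‖ ^ 2 / (48 * ‖T‖) := by
    have := norm_pos_iff.2 hTy
    have := sub_pos.2 hε₁
    positivity
  refine hδ.trans_le (le_minMod fun x hx => ?_)
  rw [div_le_iff₀ (by positivity), mul_comm _ (48 * ‖T‖)]
  exact hA.one_sub_mul_sq_norm_apply_le hε₀ hε₁ hx hy

end ApproximateOrthogonality

theorem aop_iff_bddBelow_general (T : H →L[ℂ] H) (hT : T ≠ 0) :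
    (∃ ε : ℝ, 0 ≤ ε ∧ ε < 1 ∧ IsAOP T ε) ↔ 0 < minMod T := by
  refine ⟨fun ⟨ε, hε₀, hε₁, hA⟩ => hA.minMod_pos hε₀ hε₁ hT, fun hm => ?_⟩
  have hmM := minMod_le_opNorm T
  have hden : 0 < ‖T‖ ^ 2 + minMod T ^ 2 := by positivity
  exact ⟨_, div_nonneg (by nlinarith) hden.le, (div_lt_one hden).2 (by nlinarith),
    isAOP_of_minMod_pos hm⟩

/-- A nonzero `T` is `ε`-AOP for some `ε ∈ [0,1)` iff `T` is bounded from below. -/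
theorem aop_iff_bddBelow (hdim : 2 ≤ Module.rank ℂ H) (T : H →L[ℂ] H) (hT : T ≠ 0) :
    (∃ ε : ℝ, 0 ≤ ε ∧ ε < 1 ∧ IsAOP T ε) ↔ 0 < minMod T :=
  aop_iff_bddBelow_general T hT
end
end

section
/- Let H be a complex Hilbert space with dim H ≥ 2, let T be a bounded linear operator on H with m(T) > 0, and let x, y ∈ H satisfy ⟨x,y⟩ = 0. Then |⟨Tx,Ty⟩| ≤ ((‖T‖² − m(T)²)/(‖T‖² + m(T)²)) · ‖Tx‖‖Ty‖. -/
open scoped ComplexInnerProductSpace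

noncomputable section

variable {H : Type*} [NormedAddCommGroup H] [InnerProductSpace ℂ H] [CompleteSpace H]

private lemma aop_pos_cancel (c x : ℝ) (hc : 0 < c) (h : 0 < c * x) : 0 < x := by
  nlinarith

private lemma aop_helper1 (x y : ℝ) (h : 0 < x * y) (hy : 0 ≤ y) : 0 < x := by
  nlinarith

private lemma aop_helper2 (x y : ℝ) (h : 0 < x * y) (hy : y ≤ 0) : x < 0 := by
  nlinarith

private lemma aop_opt_lemma (u v p : ℝ) (hu : 0 ≤ u) (hv : 0 ≤ v) (hp : 0 ≤ p)
    (h : ∀ t : ℝ, 0 < t → 2*(t*p) ≤ u + t^2*v) : p^2 ≤ u*v := by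
  rcases hp.eq_or_lt with h0 | h0
  · simpa [← h0] using mul_nonneg hu hv
  have hv0 : 0 < v := by
    rcases hv.eq_or_lt with rfl | hv0
    · exfalso
      have ht : 0 < (u+1)/(2*p) := by positivity
      have h2 := h _ ht
      have heq : 2*(((u+1)/(2*p))*p) = u+1 := by field_simp
      rw [heq] at h2
      nlinarith
    · exact hv0
  have hu0 : 0 < u := by
    rcases hu.eq_or_lt with rfl | hu0
    · exfalso
      have ht : 0 < p/v := by positivity
      have h2 := h _ ht
      have h3 := mul_le_mul_of_nonneg_right h2 hv0.le
      have e1 : 2*((p/v)*p)*v = 2*p^2 := by field_simp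
      have e2 : (0 + (p/v)^2*v)*v = p^2 := by field_simp; ring
      rw [e1, e2] at h3
      nlinarith
    · exact hu0
  set r := Real.sqrt (u/v) with hr
  have hrpos : 0 < r := Real.sqrt_pos.2 (by positivity)
  have hr2 : r^2 * v = u := by
    rw [hr, Real.sq_sqrt (by positivity : (0:ℝ) ≤ u/v)]
    field_simp
  have h2 := h r hrpos
  have h3 : r*p ≤ u := by nlinarith
  have h4 : (r*p)^2 ≤ u^2 := by nlinarith [mul_pos hrpos h0]
  have h5 : r^2*p^2 ≤ r^2*(u*v) := by nlinarith
  have hr2pos : 0 < r^2 := by positivity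
  nlinarith [h5, hr2pos]

private lemma aop_key_lemma (s t a b A B p : ℝ) (hs : 0 < s) (hst : s ≤ t)
    (ha : 0 < a) (hb : 0 < b)
    (hA1 : s*a ≤ A) (hA2 : A ≤ t*a) (hB1 : s*b ≤ B) (hB2 : B ≤ t*b) (hp : 0 ≤ p)
    (h1 : p^2 ≤ (A-s*a)*(B-s*b)) (h2 : p^2 ≤ (t*a-A)*(t*b-B)) :
    p^2*(t+s)^2 ≤ (t-s)^2*(A*B) := by
  have ht : 0 < t := hs.trans_le hst
  by_contra hc
  push_neg at hc
  have h1c : (t-s)^2*(A*B) < (A-s*a)*(B-s*b)*(t+s)^2 :=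
    lt_of_lt_of_le hc (mul_le_mul_of_nonneg_right h1 (sq_nonneg _))
  have h2c : (t-s)^2*(A*B) < (t*a-A)*(t*b-B)*(t+s)^2 :=
    lt_of_lt_of_le hc (mul_le_mul_of_nonneg_right h2 (sq_nonneg _))
  have hab : 0 < a*b := mul_pos ha hb
  have hSl : 2*(s*(a*b)) ≤ a*B + b*A := by
    nlinarith [mul_nonneg ha.le (sub_nonneg.2 hB1), mul_nonneg hb.le (sub_nonneg.2 hA1)]
  have hSu : a*B + b*A ≤ 2*(t*(a*b)) := by
    nlinarith [mul_nonneg ha.le (sub_nonneg.2 hB2), mul_nonneg hb.le (sub_nonneg.2 hA2)]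
  have hF2 : 0 ≤ t*(a*B + b*A) - s*(a*b)*(t+s) := by
    nlinarith [mul_nonneg ht.le (sub_nonneg.2 hSl),
      mul_nonneg (mul_nonneg hs.le hab.le) (sub_nonneg.2 hst)]
  have hF2' : s*(a*B + b*A) - t*(a*b)*(t+s) ≤ 0 := by
    nlinarith [mul_nonneg hs.le (sub_nonneg.2 hSu),
      mul_nonneg (mul_nonneg ht.le hab.le) (sub_nonneg.2 hst)]
  have hW1 : 0 < 4*t*(A*B) - (t+s)^2*(a*B + b*A) + s*(a*b)*(t+s)^2 := by
    refine aop_pos_cancel s _ hs ?_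
    calc (0:ℝ) < (A-s*a)*(B-s*b)*(t+s)^2 - (t-s)^2*(A*B) := by linarith
      _ = s * (4*t*(A*B) - (t+s)^2*(a*B + b*A) + s*(a*b)*(t+s)^2) := by ring
  have hW2 : 0 < 4*s*(A*B) - (t+s)^2*(a*B + b*A) + t*(a*b)*(t+s)^2 := by
    refine aop_pos_cancel t _ ht ?_
    calc (0:ℝ) < (t*a-A)*(t*b-B)*(t+s)^2 - (t-s)^2*(A*B) := by linarith
      _ = t * (4*s*(A*B) - (t+s)^2*(a*B + b*A) + t*(a*b)*(t+s)^2) := by ring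
  have hQ1 : 0 < ((a*B + b*A) - a*b*(t+s)) * (t*(a*B + b*A) - s*(a*b)*(t+s)) := by
    have hid : ((a*B + b*A) - a*b*(t+s)) * (t*(a*B + b*A) - s*(a*b)*(t+s))
        = (a*b)*(4*t*(A*B) - (t+s)^2*(a*B + b*A) + s*(a*b)*(t+s)^2) + t*(a*B-b*A)^2 := by
      ring
    rw [hid]
    have := add_pos_of_pos_of_nonneg (mul_pos hab hW1)
      (mul_nonneg ht.le (sq_nonneg (a*B-b*A)))
    linarith
  have hQ2 : 0 < ((a*B + b*A) - a*b*(t+s)) * (s*(a*B + b*A) - t*(a*b)*(t+s)) := by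
    have hid : ((a*B + b*A) - a*b*(t+s)) * (s*(a*B + b*A) - t*(a*b)*(t+s))
        = (a*b)*(4*s*(A*B) - (t+s)^2*(a*B + b*A) + t*(a*b)*(t+s)^2) + s*(a*B-b*A)^2 := by
      ring
    rw [hid]
    have := add_pos_of_pos_of_nonneg (mul_pos hab hW2)
      (mul_nonneg hs.le (sq_nonneg (a*B-b*A)))
    linarith
  have step1 := aop_helper1 _ _ hQ1 hF2
  have step2 := aop_helper2 _ _ hQ2 hF2'
  linarith

/-- If `m(T) > 0` and `x ⊥ y`, then `|⟪Tx,Ty⟫| ≤ ((‖T‖² − m(T)²)/(‖T‖² + m(T)²)) ‖Tx‖ ‖Ty‖`. -/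
theorem aop_upper_bound (hdim : 2 ≤ Module.rank ℂ H) (T : H →L[ℂ] H)
    (hm : 0 < minMod T) (x y : H) (hxy : ⟪x, y⟫ = 0) :
    ‖⟪T x, T y⟫‖ ≤ (‖T‖ ^ 2 - minMod T ^ 2) / (‖T‖ ^ 2 + minMod T ^ 2) * (‖T x‖ * ‖T y‖) := by
  have hbdd : BddBelow {r : ℝ | ∃ x : H, ‖x‖ = 1 ∧ ‖T x‖ = r} :=
    ⟨0, fun r ⟨z, _, hr⟩ => hr ▸ norm_nonneg _⟩
  have hmin : ∀ z : H, minMod T * ‖z‖ ≤ ‖T z‖ := by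
    intro z
    rcases eq_or_ne z 0 with rfl | hz
    · simp
    · have hnz : (0:ℝ) < ‖z‖ := norm_pos_iff.2 hz
      have hu : ‖((‖z‖:ℂ)⁻¹ • z)‖ = 1 := by
        rw [norm_smul, norm_inv, Complex.norm_real, norm_norm]
        field_simp
      have hmem : minMod T ≤ ‖T ((‖z‖:ℂ)⁻¹ • z)‖ := csInf_le hbdd ⟨_, hu, rfl⟩
      rw [map_smul, norm_smul, norm_inv, Complex.norm_real, norm_norm] at hmem
      rw [← le_div_iff₀ hnz]
      calc minMod T ≤ ‖z‖⁻¹ * ‖T z‖ := hmem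
        _ = ‖T z‖ / ‖z‖ := by ring
  have hmM : minMod T ≤ ‖T‖ := by
    obtain ⟨z, hz⟩ : ∃ z : H, z ≠ 0 := by
      have h0 : 0 < Module.rank ℂ H := lt_of_lt_of_le (by norm_num) hdim
      rwa [rank_pos_iff_exists_ne_zero] at h0
    have hnz : (0:ℝ) < ‖z‖ := norm_pos_iff.2 hz
    have hu : ‖((‖z‖:ℂ)⁻¹ • z)‖ = 1 := by
      rw [norm_smul, norm_inv, Complex.norm_real, norm_norm]
      field_simp
    calc minMod T ≤ ‖T ((‖z‖:ℂ)⁻¹ • z)‖ := csInf_le hbdd ⟨_, hu, rfl⟩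
      _ ≤ ‖T‖ * ‖((‖z‖:ℂ)⁻¹ • z)‖ := T.le_opNorm _
      _ = ‖T‖ := by rw [hu, mul_one]
  rcases eq_or_ne (⟪T x, T y⟫) 0 with hz | hz
  · rw [hz, norm_zero]
    apply mul_nonneg (div_nonneg (by nlinarith) (by positivity))
    positivity
  have hx : x ≠ 0 := by rintro rfl; simp at hz
  have hy : y ≠ 0 := by rintro rfl; simp at hz
  set m := minMod T with hmdef
  set M := ‖T‖ with hMdef
  set p := ‖⟪T x, T y⟫‖ with hpdef
  have hppos : 0 < p := norm_pos_iff.2 hz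
  set c : ℂ := (p : ℂ) / ⟪T x, T y⟫ with hcdef
  have hcw : c * ⟪T x, T y⟫ = (p : ℂ) := div_mul_cancel₀ _ hz
  have hcnorm : ‖c‖ = 1 := by
    rw [hcdef, norm_div, Complex.norm_real, Real.norm_eq_abs, abs_of_pos hppos]
    exact div_self hppos.ne'
  have key1 : ∀ r : ℝ, 0 < r →
      2*(r*p) ≤ (‖T x‖^2 - m^2*‖x‖^2) + r^2*(‖T y‖^2 - m^2*‖y‖^2) := by
    intro r hr
    have hd : ‖(r:ℂ)*c‖ = r := by
      rw [norm_mul, hcnorm, mul_one, Complex.norm_real, Real.norm_eq_abs, abs_of_pos hr]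
    have hnz : ‖x - ((r:ℂ)*c) • y‖^2 = ‖x‖^2 + r^2*‖y‖^2 := by
      rw [norm_sub_sq (𝕜 := ℂ), inner_smul_right, hxy, mul_zero, norm_smul, hd]
      simp; ring
    have hTnz : ‖T x - ((r:ℂ)*c) • T y‖^2 = ‖T x‖^2 - 2*(r*p) + r^2*‖T y‖^2 := by
      rw [norm_sub_sq (𝕜 := ℂ), inner_smul_right]
      have he : (r:ℂ)*c * ⟪T x, T y⟫ = ((r*p : ℝ) : ℂ) := by
        rw [mul_assoc, hcw]; push_cast; ring
      rw [he, norm_smul, hd]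
      simp [Complex.ofReal_re]; ring
    have h1 := hmin (x - ((r:ℂ)*c) • y)
    have h1' : (m * ‖x - ((r:ℂ)*c) • y‖)^2 ≤ ‖T (x - ((r:ℂ)*c) • y)‖^2 :=
      pow_le_pow_left₀ (mul_nonneg hm.le (norm_nonneg _)) h1 2
    rw [map_sub, map_smul] at h1'
    rw [mul_pow, hnz, hTnz] at h1'
    nlinarith [mul_nonneg (mul_nonneg hm.le hm.le)
      (mul_nonneg (sq_nonneg (‖x‖)) (sq_nonneg r))]
  have key2 : ∀ r : ℝ, 0 < r →
      2*(r*p) ≤ (M^2*‖x‖^2 - ‖T x‖^2) + r^2*(M^2*‖y‖^2 - ‖T y‖^2) := by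
    intro r hr
    have hd : ‖(r:ℂ)*c‖ = r := by
      rw [norm_mul, hcnorm, mul_one, Complex.norm_real, Real.norm_eq_abs, abs_of_pos hr]
    have hnz : ‖x + ((r:ℂ)*c) • y‖^2 = ‖x‖^2 + r^2*‖y‖^2 := by
      rw [norm_add_sq (𝕜 := ℂ), inner_smul_right, hxy, mul_zero, norm_smul, hd]
      simp; ring
    have hTnz : ‖T x + ((r:ℂ)*c) • T y‖^2 = ‖T x‖^2 + 2*(r*p) + r^2*‖T y‖^2 := by
      rw [norm_add_sq (𝕜 := ℂ), inner_smul_right]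
      have he : (r:ℂ)*c * ⟪T x, T y⟫ = ((r*p : ℝ) : ℂ) := by
        rw [mul_assoc, hcw]; push_cast; ring
      rw [he, norm_smul, hd]
      simp [Complex.ofReal_re]; ring
    have h1 := T.le_opNorm (x + ((r:ℂ)*c) • y)
    have h1' : ‖T (x + ((r:ℂ)*c) • y)‖^2 ≤ (M * ‖x + ((r:ℂ)*c) • y‖)^2 :=
      pow_le_pow_left₀ (norm_nonneg _) h1 2
    rw [map_add, map_smul] at h1'
    rw [mul_pow, hnz, hTnz] at h1'
    linarith
  -- bounds
  have hxpos : (0:ℝ) < ‖x‖ := norm_pos_iff.2 hx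
  have hypos : (0:ℝ) < ‖y‖ := norm_pos_iff.2 hy
  have hA1 : m^2*‖x‖^2 ≤ ‖T x‖^2 := by
    have := pow_le_pow_left₀ (mul_nonneg hm.le (norm_nonneg x)) (hmin x) 2
    rw [mul_pow] at this; linarith
  have hB1 : m^2*‖y‖^2 ≤ ‖T y‖^2 := by
    have := pow_le_pow_left₀ (mul_nonneg hm.le (norm_nonneg y)) (hmin y) 2
    rw [mul_pow] at this; linarith
  have hA2 : ‖T x‖^2 ≤ M^2*‖x‖^2 := by
    have := pow_le_pow_left₀ (norm_nonneg (T x)) (T.le_opNorm x) 2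
    rw [mul_pow] at this; linarith
  have hB2 : ‖T y‖^2 ≤ M^2*‖y‖^2 := by
    have := pow_le_pow_left₀ (norm_nonneg (T y)) (T.le_opNorm y) 2
    rw [mul_pow] at this; linarith
  have opt1 : p^2 ≤ (‖T x‖^2 - m^2*‖x‖^2)*(‖T y‖^2 - m^2*‖y‖^2) :=
    aop_opt_lemma _ _ _ (by linarith) (by linarith) (norm_nonneg _) key1
  have opt2 : p^2 ≤ (M^2*‖x‖^2 - ‖T x‖^2)*(M^2*‖y‖^2 - ‖T y‖^2) :=
    aop_opt_lemma _ _ _ (by linarith) (by linarith) (norm_nonneg _) key2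
  have hkey := aop_key_lemma (m^2) (M^2) (‖x‖^2) (‖y‖^2) (‖T x‖^2) (‖T y‖^2) p
    (by positivity) (by nlinarith) (by positivity) (by positivity)
    hA1 hA2 hB1 hB2 (norm_nonneg _) opt1 opt2
  rw [div_mul_eq_mul_div, le_div_iff₀ (by positivity)]
  have hR : 0 ≤ (M^2 - m^2)*(‖T x‖*‖T y‖) :=
    mul_nonneg (by nlinarith) (by positivity)
  have hsum : 0 ≤ p*(M^2 + m^2) + (M^2 - m^2)*(‖T x‖*‖T y‖) :=
    add_nonneg (by positivity) hR
  nlinarith [hkey, hR, hsum]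
end
end

section
/- Let H be a complex Hilbert space and T a bounded linear operator on H. Then dist(T, ℂ𝒱) ≥ (‖T‖ − m(T))/2, where dist(T, ℂ𝒱) = inf{‖T − λV‖ : λ ∈ ℂ, V a linear isometry on H}. -/
open scoped ComplexInnerProductSpace

noncomputable section

variable {H : Type*} [NormedAddCommGroup H] [InnerProductSpace ℂ H] [CompleteSpace H]

/-- `dist(T, ℂ𝒱) ≥ (‖T‖ − m(T))/2`. -/
theorem distCV_lower (T : H →L[ℂ] H) :
    (‖T‖ - minMod T) / 2 ≤ distCV T := by
  have hne : (scalarIsoms H).Nonempty :=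
    ⟨0, 0, ContinuousLinearMap.id ℂ H, fun x => rfl, by simp⟩
  refine le_of_not_gt fun hlt => ?_
  obtain ⟨S, hS, hSd⟩ := (Metric.infDist_lt_iff hne).1 hlt
  obtain ⟨c, V, hV, rfl⟩ := hS
  rw [dist_eq_norm] at hSd
  set d := ‖T - c • V‖ with hd
  have hSx : ∀ x : H, ‖(c • V) x‖ = ‖c‖ * ‖x‖ := by
    intro x
    simp [norm_smul, hV x]
  have hd1 : ∀ x : H, ‖T x - (c • V) x‖ ≤ d * ‖x‖ := by
    intro x
    simpa using (T - c • V).le_opNorm x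
  have hnormT : ‖T‖ ≤ d + ‖c‖ := by
    apply ContinuousLinearMap.opNorm_le_bound _ (by positivity)
    intro x
    calc ‖T x‖ = ‖(T x - (c • V) x) + (c • V) x‖ := by rw [sub_add_cancel]
      _ ≤ ‖T x - (c • V) x‖ + ‖(c • V) x‖ := norm_add_le _ _
      _ ≤ d * ‖x‖ + ‖c‖ * ‖x‖ := add_le_add (hd1 x) (hSx x).le
      _ = (d + ‖c‖) * ‖x‖ := by ring
  by_cases hH : ∃ x : H, ‖x‖ = 1
  · have hm : ‖c‖ - d ≤ minMod T := by
      apply le_csInf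
      · obtain ⟨x, hx⟩ := hH; exact ⟨‖T x‖, x, hx, rfl⟩
      · rintro r ⟨x, hx, rfl⟩
        have h1 : ‖(c • V) x‖ - ‖(c • V) x - T x‖ ≤ ‖T x‖ := by
          simpa using norm_sub_norm_le ((c • V) x) ((c • V) x - T x)
        have h2 : ‖(c • V) x - T x‖ ≤ d := by
          rw [norm_sub_rev]
          simpa [hx] using hd1 x
        have h3 : ‖(c • V) x‖ = ‖c‖ := by rw [hSx x, hx, mul_one]
        linarith
    rw [hd] at hSd
    linarith
  · have hzero : ∀ x : H, x = 0 := by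
      intro x
      by_contra hx
      exact hH ⟨‖x‖⁻¹ • x, by
        rw [norm_smul]
        simp [norm_ne_zero_iff.mpr hx]⟩
    have hT : ‖T‖ = 0 := by
      have : T = 0 := by ext x; simp [hzero x]
      rw [this]; simp
    have hmin : minMod T = 0 := by
      rw [minMod]
      convert Real.sInf_empty
      rw [Set.eq_empty_iff_forall_notMem]
      rintro r ⟨x, hx, -⟩
      simp [hzero x] at hx
    rw [hT, hmin] at hSd
    have : (0:ℝ) ≤ ‖T - c • V‖ := norm_nonneg _
    linarith
end
end

section
/- Let H be a complex Hilbert space and T = λW where λ is a nonzero complex scalar and W is a co-isometry on H (W W* = 1) that is not unitary. Then dist(T, ℂ𝒱) = ‖T‖. -/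
open scoped ComplexInnerProductSpace

noncomputable section

variable {H : Type*} [NormedAddCommGroup H] [InnerProductSpace ℂ H] [CompleteSpace H]

/-- If `T = λW` with `λ ≠ 0` and `W` a non-unitary co-isometry, then `dist(T, ℂ𝒱) = ‖T‖`. -/
theorem distCV_coisometry (W : H →L[ℂ] H)
    (hco : W ∘L ContinuousLinearMap.adjoint W = 1)
    (hnu : ContinuousLinearMap.adjoint W ∘L W ≠ 1)
    (c : ℂ) (hc : c ≠ 0) :
    distCV (c • W) = ‖c • W‖ := by
  classical
  set Wd := ContinuousLinearMap.adjoint W with hWd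
  -- the adjoint is a pointwise isometry
  have hadj : ∀ y : H, ‖Wd y‖ = ‖y‖ := by
    intro y
    have h0 : W (Wd y) = y := by
      have := congrFun (congrArg (fun (f : H →L[ℂ] H) => (f : H → H)) hco) y
      simpa using this
    have h1 : ⟪Wd y, Wd y⟫ = ⟪y, y⟫ := by
      rw [hWd, ContinuousLinearMap.adjoint_inner_left, ← hWd, h0]
    have h2 : (‖Wd y‖ : ℝ) ^ 2 = ‖y‖ ^ 2 := by
      rw [← @inner_self_eq_norm_sq ℂ, ← @inner_self_eq_norm_sq ℂ, h1]
    nlinarith [norm_nonneg (Wd y), norm_nonneg y]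
  -- a unit vector in the kernel of W
  obtain ⟨v, hv⟩ : ∃ v : H, Wd (W v) ≠ v := by
    by_contra h
    push_neg at h
    exact hnu (by ext z; simpa using h z)
  set x0 : H := Wd (W v) - v with hx0def
  have hx0 : x0 ≠ 0 := sub_ne_zero.mpr hv
  have hWx0 : W x0 = 0 := by
    have h1 := congrFun (congrArg (fun (f : H →L[ℂ] H) => (f : H → H)) hco) (W v)
    simp only [ContinuousLinearMap.coe_comp', Function.comp_apply,
      ContinuousLinearMap.one_apply] at h1
    simp [hx0def, map_sub, h1]
  set x : H := (‖x0‖ : ℂ)⁻¹ • x0 with hxdef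
  have hx0norm : (0:ℝ) < ‖x0‖ := norm_pos_iff.mpr hx0
  have hxnorm : ‖x‖ = 1 := by
    rw [hxdef, norm_smul]
    simp [abs_of_pos hx0norm, inv_mul_cancel₀ (ne_of_gt hx0norm)]
  have hWx : W x = 0 := by rw [hxdef, map_smul, hWx0, smul_zero]
  -- norm of W is 1
  have hWle : ‖W‖ ≤ 1 := by
    rw [← ContinuousLinearMap.adjoint.norm_map W]
    exact ContinuousLinearMap.opNorm_le_bound _ zero_le_one
      (fun y => by rw [← hWd, hadj, one_mul])
  have hWge : 1 ≤ ‖W‖ := by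
    have h1 : ‖x‖ = ‖Wd x‖ := (hadj x).symm
    have h2 : ‖Wd x‖ ≤ ‖Wd‖ * ‖x‖ := Wd.le_opNorm x
    have h3 : ‖Wd‖ = ‖W‖ := by rw [hWd, ContinuousLinearMap.adjoint.norm_map W]
    rw [hxnorm] at h1 h2
    rw [h3, mul_one] at h2
    linarith
  have hWnorm : ‖W‖ = 1 := le_antisymm hWle hWge
  have hTnorm : ‖c • W‖ = ‖c‖ := by rw [norm_smul, hWnorm, mul_one]
  -- 0 is in the set
  have h0mem : (0 : H →L[ℂ] H) ∈ scalarIsoms H :=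
    ⟨0, 1, fun z => by simp, by simp⟩
  -- lower bound for distance to every element of the set
  have key : ∀ S ∈ scalarIsoms H, ‖c • W‖ ≤ dist (c • W) S := by
    rintro S ⟨d, V, hV, rfl⟩
    have hVinner : ∀ a b : H, ⟪V a, V b⟫ = ⟪a, b⟫ :=
      (LinearMap.norm_map_iff_inner_map_map V).mp hV
    set y : H := Wd (V x) with hydef
    have hynorm : ‖y‖ = 1 := by rw [hydef, hadj, hV, hxnorm]
    have hWy : W y = V x := by
      have h1 := congrFun (congrArg (fun (f : H →L[ℂ] H) => (f : H → H)) hco) (V x)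
      simpa using h1
    have hxy : ⟪x, y⟫ = 0 := by
      rw [hydef, hWd, ContinuousLinearMap.adjoint_inner_right, hWx, inner_zero_left]
    have hVxy : ⟪V x, V y⟫ = 0 := by rw [hVinner, hxy]
    have happ : (c • W - d • V) y = c • V x - d • V y := by
      simp [ContinuousLinearMap.sub_apply, hWy]
    have hsq : ‖(c • W - d • V) y‖ ^ 2 = ‖c • V x‖ ^ 2 + ‖d • V y‖ ^ 2 := by
      rw [happ, @norm_sub_sq ℂ]
      have : ⟪c • V x, d • V y⟫ = 0 := by
        rw [inner_smul_left, inner_smul_right, hVxy]; ring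
      rw [this]
      simp
    have hnc : ‖c • V x‖ = ‖c‖ := by rw [norm_smul, hV, hxnorm, mul_one]
    have h1 : ‖c‖ ≤ ‖(c • W - d • V) y‖ := by
      have h2 : ‖c‖ ^ 2 ≤ ‖(c • W - d • V) y‖ ^ 2 := by
        rw [hsq, hnc]
        nlinarith [norm_nonneg (d • V y)]
      nlinarith [norm_nonneg ((c • W - d • V) y), norm_nonneg c]
    have h2 : ‖(c • W - d • V) y‖ ≤ ‖c • W - d • V‖ :=
      (c • W - d • V).unit_le_opNorm y (le_of_eq hynorm)
    rw [dist_eq_norm, hTnorm]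
    linarith
  -- conclude
  refine le_antisymm ?_ ?_
  · have : Metric.infDist (c • W) (scalarIsoms H) ≤ dist (c • W) 0 :=
      Metric.infDist_le_dist_of_mem h0mem
    simpa [distCV, dist_zero_right] using this
  · by_contra hlt
    push_neg at hlt
    rw [distCV, Metric.infDist_lt_iff ⟨0, h0mem⟩] at hlt
    obtain ⟨S, hS, hdS⟩ := hlt
    exact absurd (key S hS) (not_le.mpr hdS)
end
end
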